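/- Let n ≥ 2 and k ≥ 2. Let Q₁, …, Q_k be words each containing every element of {1, …, n} exactly once, and let R₁, …, R_k be words each containing every element of {1′, …, n′} exactly once. Suppose that for all distinct x, y ∈ {1, …, n} there exist i, j with x before y in Q_i and y before x in Q_j, and likewise for all distinct x′, y′ ∈ {1′, …, n′} there exist i, j with x′ before y′ in R_i and y′ before x′ in R_j. Then the concatenation Q₁R₁Q₂R₂⋯Q_kR_k is a k-uniform word representing the complete bipartite graph K_{n,n} with parts {1, …, n} and {1′, …, n′}. -/

import Mathlib

/-- Letters `x` and `y` alternate in the word `w`. -/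
def Alternate {V : Type*} [DecidableEq V] (w : List V) (x y : V) : Prop :=
  (w.filter fun z => decide (z = x ∨ z = y)).Chain' (· ≠ ·)

/-- The word `w` represents the simple graph `G`. -/
def Represents {V : Type*} [DecidableEq V] (w : List V) (G : SimpleGraph V) : Prop :=
  (∀ v : V, v ∈ w) ∧ ∀ x y : V, x ≠ y → (G.Adj x y ↔ Alternate w x y)

/-- Each letter of the alphabet occurs exactly `k` times in `w`. -/
def IsUniform {V : Type*} [DecidableEq V] (w : List V) (k : ℕ) : Prop :=
  ∀ v : V, w.count v = k

/-- The crown graph `H_{n,n}`. -/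
def Crown (n : ℕ) : SimpleGraph (Fin n ⊕ Fin n) :=
  SimpleGraph.fromRel fun x y =>
    match x, y with
    | Sum.inl i, Sum.inr j => i ≠ j
    | _, _ => False

/-- `P` is a permutation of the set `A`: each element of `A` occurs exactly once. -/
def IsPermOf {V : Type*} [DecidableEq V] (P : List V) (A : Finset V) : Prop :=
  (∀ a ∈ A, P.count a = 1) ∧ ∀ x ∈ P, x ∈ A


/-- The "left" part `{1, …, n}` of the vertex set `Fin n ⊕ Fin n`. -/
def leftSet (n : ℕ) : Finset (Fin n ⊕ Fin n) :=
  Finset.univ.filter fun z => z.isLeft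

/-- The "right" part `{1′, …, n′}` of the vertex set `Fin n ⊕ Fin n`. -/
def rightSet (n : ℕ) : Finset (Fin n ⊕ Fin n) :=
  Finset.univ.filter fun z => z.isRight

/-- The complete bipartite graph `K_{n,n}` with parts `{1, …, n}` and `{1′, …, n′}`. -/
def CompleteBip (n : ℕ) : SimpleGraph (Fin n ⊕ Fin n) :=
  SimpleGraph.fromRel fun x y => x.isLeft ∧ y.isRight

/-!
Each block `Q i ++ R i` contains every letter exactly once, so the word is `k`-uniform, and its
restriction to two letters `x ≠ y` is the concatenation of the restrictions of the blocks, each of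
which is `xy` or `yx`. Such a concatenation alternates exactly when all blocks give the same
order. For `x` on the left and `y` on the right every block gives `xy`; for two letters in the
same part, the hypotheses provide blocks giving both orders.
-/

instance Sum.instLawfulBEq {α β : Type*} [BEq α] [LawfulBEq α] [BEq β] [LawfulBEq β] :
    LawfulBEq (α ⊕ β) where
  rfl {a} := by cases a <;> simp [BEq.beq, Sum.instBEq.beq]
  eq_of_beq {a b} h := by cases a <;> cases b <;> simp_all [BEq.beq, Sum.instBEq.beq]

section Words

variable {α : Type*} [DecidableEq α]

def restrictPair (w : List α) (x y : α) : List α :=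
  w.filter fun z => decide (z = x ∨ z = y)

theorem alternate_iff_isChain_restrictPair {w : List α} {x y : α} :
    Alternate w x y ↔ (restrictPair w x y).IsChain (· ≠ ·) :=
  Iff.rfl

theorem restrictPair_comm (w : List α) (x y : α) : restrictPair w x y = restrictPair w y x := by
  simp only [restrictPair, or_comm]

theorem restrictPair_append (u v : List α) (x y : α) :
    restrictPair (u ++ v) x y = restrictPair u x y ++ restrictPair v x y :=
  List.filter_append ..

theorem restrictPair_eq_singleton {w : List α} {x y : α} (hx : w.count x = 1) (hy : y ∉ w) :
    restrictPair w x y = [x] := by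
  have : restrictPair w x y = w.filter fun z => decide (z = x) :=
    List.filter_congr fun z hz => by grind
  rw [this, List.filter_eq, hx, List.replicate_one]

theorem restrictPair_eq_of_idxOf_lt {w : List α} {x y : α} (hx : w.count x = 1)
    (hy : w.count y = 1) (hxy : w.idxOf x < w.idxOf y) : restrictPair w x y = [x, y] := by
  induction w with
  | nil => simp at hxy
  | cons a t ih =>
    by_cases hax : a = x
    · subst hax
      have hya : y ≠ a := by rintro rfl; simp at hxy
      have hat : a ∉ t := List.count_eq_zero.mp (by simpa [List.count_cons_self] using hx)
      rw [List.count_cons_of_ne (Ne.symm hya)] at hy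
      rw [restrictPair, List.filter_cons_of_pos (by simp), ← restrictPair, restrictPair_comm,
        restrictPair_eq_singleton hy hat]
    · by_cases hay : a = y
      · subst hay; simp [List.idxOf_cons_self] at hxy
      · rw [List.count_cons_of_ne hax] at hx
        rw [List.count_cons_of_ne hay] at hy
        rw [List.idxOf_cons_ne _ hax, List.idxOf_cons_ne _ hay] at hxy
        rw [restrictPair, List.filter_cons_of_neg (by simp [hax, hay]), ← restrictPair]
        exact ih hx hy (by omega)

theorem idxOf_append_lt_iff_of_mem {P R : List α} {x y : α} (hx : x ∈ P) (hy : y ∈ P) :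
    (P ++ R).idxOf x < (P ++ R).idxOf y ↔ P.idxOf x < P.idxOf y := by
  rw [List.idxOf_append_of_mem hx, List.idxOf_append_of_mem hy]

theorem idxOf_append_lt_iff_of_notMem {P R : List α} {x y : α} (hx : x ∉ P) (hy : y ∉ P) :
    (P ++ R).idxOf x < (P ++ R).idxOf y ↔ R.idxOf x < R.idxOf y := by
  rw [List.idxOf_append_of_notMem hx, List.idxOf_append_of_notMem hy, Nat.add_lt_add_iff_left]

theorem restrictPair_eq_or {w : List α} {x y : α} (hx : w.count x = 1) (hy : w.count y = 1)
    (hxy : x ≠ y) : restrictPair w x y = [x, y] ∨ restrictPair w x y = [y, x] := by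
  have hne : w.idxOf x ≠ w.idxOf y :=
    (List.idxOf_inj (List.count_pos_iff.mp (by omega))).not.mpr hxy
  rcases hne.lt_or_gt with h | h
  · exact .inl (restrictPair_eq_of_idxOf_lt hx hy h)
  · exact .inr (restrictPair_comm w x y ▸ restrictPair_eq_of_idxOf_lt hy hx h)

end Words

section Blocks

variable {α : Type*} [DecidableEq α] {k : ℕ} {B : Fin k → List α}

theorem alternate_comm {w : List α} {x y : α} : Alternate w x y ↔ Alternate w y x := by
  rw [alternate_iff_isChain_restrictPair, alternate_iff_isChain_restrictPair, restrictPair_comm]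

theorem count_flatten_ofFn_of_count_eq_one {v : α} (h : ∀ i, (B i).count v = 1) :
    (List.ofFn B).flatten.count v = k := by
  simp [List.count_flatten, List.map_ofFn, Function.comp_def, h]

theorem restrictPair_flatten_ofFn (x y : α) :
    restrictPair (List.ofFn B).flatten x y =
      (List.ofFn fun i => restrictPair (B i) x y).flatten := by
  rw [restrictPair, List.filter_flatten, List.map_ofFn]
  rfl

theorem alternate_flatten_ofFn {x y : α} (hxy : x ≠ y)
    (hB : ∀ i, restrictPair (B i) x y = [x, y]) : Alternate (List.ofFn B).flatten x y := by
  rw [alternate_iff_isChain_restrictPair, restrictPair_flatten_ofFn, funext hB, List.ofFn_const,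
    List.isChain_flatten (by simp)]
  exact ⟨by simp [hxy], List.isChain_replicate_of_rel _ (by simp [hxy.symm])⟩

theorem not_alternate_flatten_ofFn {x y : α} (hx : ∀ i, (B i).count x = 1)
    (hy : ∀ i, (B i).count y = 1) {i j : Fin k} (hi : (B i).idxOf x < (B i).idxOf y)
    (hj : (B j).idxOf y < (B j).idxOf x) : ¬ Alternate (List.ofFn B).flatten x y := by
  have hne : x ≠ y := by rintro rfl; omega
  set M := List.ofFn fun i => restrictPair (B i) x y
  have hM : ∀ m ∈ M, m = [x, y] ∨ m = [y, x] :=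
    List.forall_mem_ofFn_iff.mpr fun i => restrictPair_eq_or (hx i) (hy i) hne
  have hxyM : [x, y] ∈ M :=
    List.mem_ofFn.mpr ⟨i, restrictPair_eq_of_idxOf_lt (hx i) (hy i) hi⟩
  have hyxM : [y, x] ∈ M :=
    List.mem_ofFn.mpr ⟨j, by
      rw [restrictPair_comm]; exact restrictPair_eq_of_idxOf_lt (hy j) (hx j) hj⟩
  rw [alternate_iff_isChain_restrictPair, restrictPair_flatten_ofFn,
    List.isChain_flatten fun h => by simpa using hM [] h]
  rintro ⟨-, hchain⟩
  -- at the junction of two blocks, each `[x, y]` or `[y, x]`, the letters differ iff they agree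
  have hconst : M.IsChain (· = ·) := hchain.imp_of_mem_imp fun a b ha hb hab => by
    rcases hM a ha with rfl | rfl <;> rcases hM b hb with rfl | rfl <;> simp_all
  simpa [hne] using hconst.pairwise.forall hxyM hyxM (by simp [hne])

end Blocks

section IsPermOf

variable {V : Type*} [DecidableEq V] {P R : List V} {A B : Finset V}

theorem IsPermOf.mem (h : IsPermOf P A) {v : V} (hv : v ∈ A) : v ∈ P :=
  List.count_pos_iff.mp (by rw [h.1 v hv]; omega)

theorem IsPermOf.notMem (h : IsPermOf P A) {v : V} (hv : v ∉ A) : v ∉ P :=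
  fun hP => hv (h.2 v hP)

theorem IsPermOf.append (hP : IsPermOf P A) (hR : IsPermOf R B) (hAB : Disjoint A B) :
    IsPermOf (P ++ R) (A ∪ B) := by
  refine ⟨fun v hv => ?_, fun v hv => ?_⟩
  · rw [List.count_append]
    rcases Finset.mem_union.mp hv with hvA | hvB
    · rw [hP.1 v hvA, List.count_eq_zero.mpr (hR.notMem (Finset.disjoint_left.mp hAB hvA))]
    · rw [hR.1 v hvB, List.count_eq_zero.mpr (hP.notMem (Finset.disjoint_right.mp hAB hvB))]
  · rcases List.mem_append.mp hv with hvP | hvR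
    · exact Finset.mem_union_left B (hP.2 v hvP)
    · exact Finset.mem_union_right A (hR.2 v hvR)

theorem IsPermOf.restrictPair_append (hP : IsPermOf P A) (hR : IsPermOf R B)
    (hAB : Disjoint A B) {x y : V} (hx : x ∈ A) (hy : y ∈ B) :
    restrictPair (P ++ R) x y = [x, y] := by
  rw [_root_.restrictPair_append, restrictPair_eq_singleton (hP.1 x hx)
    (hP.notMem (Finset.disjoint_right.mp hAB hy)), restrictPair_comm,
    restrictPair_eq_singleton (hR.1 y hy) (hR.notMem (Finset.disjoint_left.mp hAB hx))]
  rfl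

end IsPermOf

theorem disjoint_leftSet_rightSet (n : ℕ) : Disjoint (leftSet n) (rightSet n) :=
  Finset.disjoint_filter.mpr fun v _ h => by simpa using h

theorem leftSet_union_rightSet (n : ℕ) : leftSet n ∪ rightSet n = Finset.univ := by
  ext v
  cases v <;> simp [leftSet, rightSet]

theorem concat_represents_complete_bipartite_general (n k : ℕ) (hk : 2 ≤ k)
    (Q R : Fin k → List (Fin n ⊕ Fin n))
    (hQ : ∀ i, IsPermOf (Q i) (leftSet n))
    (hR : ∀ i, IsPermOf (R i) (rightSet n))
    (hQmix : ∀ x y : Fin n, x ≠ y →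
      ∃ i j : Fin k, (Q i).idxOf (Sum.inl x) < (Q i).idxOf (Sum.inl y) ∧
        (Q j).idxOf (Sum.inl y) < (Q j).idxOf (Sum.inl x))
    (hRmix : ∀ x y : Fin n, x ≠ y →
      ∃ i j : Fin k, (R i).idxOf (Sum.inr x) < (R i).idxOf (Sum.inr y) ∧
        (R j).idxOf (Sum.inr y) < (R j).idxOf (Sum.inr x)) :
    IsUniform ((List.ofFn fun i => Q i ++ R i).flatten) k ∧
      Represents ((List.ofFn fun i => Q i ++ R i).flatten) (CompleteBip n) := by
  have hblock i : IsPermOf (Q i ++ R i) Finset.univ :=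
    leftSet_union_rightSet n ▸ (hQ i).append (hR i) (disjoint_leftSet_rightSet n)
  have hcount v i := (hblock i).1 v (Finset.mem_univ v)
  refine ⟨fun v => count_flatten_ofFn_of_count_eq_one (hcount v), fun v => ?_, ?_⟩
  · exact List.mem_flatten.mpr ⟨_, List.mem_ofFn.mpr ⟨⟨0, by omega⟩, rfl⟩,
      (hblock _).mem (Finset.mem_univ v)⟩
  have halt (a b : Fin n) : Alternate (List.ofFn fun i => Q i ++ R i).flatten (.inl a) (.inr b) :=
    alternate_flatten_ofFn (by simp) fun i => (hQ i).restrictPair_append (hR i)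
      (disjoint_leftSet_rightSet n) (by simp [leftSet]) (by simp [rightSet])
  -- `idxOf` in the hypotheses uses the derived `BEq` of `Sum`, not the one from `DecidableEq`
  rw [lawful_beq_subsingleton Sum.instBEq instBEqOfDecidableEq] at hQmix hRmix
  rintro (a | b) (c | d) hne
  · obtain ⟨i, j, hi, hj⟩ := hQmix a c (by simpa using hne)
    have hQmem i (a : Fin n) : Sum.inl a ∈ Q i := (hQ i).mem (by simp [leftSet])
    refine iff_of_false (by simp [CompleteBip]) (not_alternate_flatten_ofFn (hcount _) (hcount _)
      ((idxOf_append_lt_iff_of_mem (hQmem i a) (hQmem i c)).mpr hi)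
      ((idxOf_append_lt_iff_of_mem (hQmem j c) (hQmem j a)).mpr hj))
  · simpa [CompleteBip] using halt a d
  · simpa [CompleteBip, alternate_comm] using halt c b
  · obtain ⟨i, j, hi, hj⟩ := hRmix b d (by simpa using hne)
    have hQnotMem i (b : Fin n) : Sum.inr b ∉ Q i := (hQ i).notMem (by simp [leftSet])
    refine iff_of_false (by simp [CompleteBip]) (not_alternate_flatten_ofFn (hcount _) (hcount _)
      ((idxOf_append_lt_iff_of_notMem (hQnotMem i b) (hQnotMem i d)).mpr hi)
      ((idxOf_append_lt_iff_of_notMem (hQnotMem j d) (hQnotMem j b)).mpr hj))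

/-- If `Q₁, …, Q_k` are permutations of `{1, …, n}` and `R₁, …, R_k` are
permutations of `{1′, …, n′}` such that within each part every ordered pair of
distinct letters is inverted in some permutation, then `Q₁R₁Q₂R₂⋯Q_kR_k` is a
`k`-uniform word representing `K_{n,n}`. -/
theorem concat_represents_complete_bipartite (n k : ℕ) (hn : 2 ≤ n) (hk : 2 ≤ k)
    (Q R : Fin k → List (Fin n ⊕ Fin n))
    (hQ : ∀ i, IsPermOf (Q i) (leftSet n))
    (hR : ∀ i, IsPermOf (R i) (rightSet n))
    (hQmix : ∀ x y : Fin n, x ≠ y →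
      ∃ i j : Fin k, (Q i).idxOf (Sum.inl x) < (Q i).idxOf (Sum.inl y) ∧
        (Q j).idxOf (Sum.inl y) < (Q j).idxOf (Sum.inl x))
    (hRmix : ∀ x y : Fin n, x ≠ y →
      ∃ i j : Fin k, (R i).idxOf (Sum.inr x) < (R i).idxOf (Sum.inr y) ∧
        (R j).idxOf (Sum.inr y) < (R j).idxOf (Sum.inr x)) :
    IsUniform ((List.ofFn fun i => Q i ++ R i).flatten) k ∧
      Represents ((List.ofFn fun i => Q i ++ R i).flatten) (CompleteBip n) :=
  concat_represents_complete_bipartite_general n k hk Q R hQ hR hQmix hRmix
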